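/- Assume in addition that the process is of scaled type with 1−F(t)=t^{−1}L(t) for some function L slowly varying at infinity (the case α=1). Then for every λ_0∈[a,b], Y_{t,λ_0}/t → 0 in probability and Z_{t,λ_0}/t → 0 in probability as t→∞. -/

import Mathlib

open MeasureTheory ProbabilityTheory Filter Set
open scoped ENNReal NNReal Topology

noncomputable section

/-- The cumulative distribution function of a measure on `ℝ`. -/
def cdfOf (μ : Measure ℝ) (t : ℝ) : ℝ := (μ (Set.Iic t)).toReal

/-- The Laplace transform `∫ e^{-z x} dμ(x)` of a measure on `ℝ`. -/
def laplaceOf (μ : Measure ℝ) (z : ℝ) : ℝ := ∫ x, Real.exp (-(z * x)) ∂μ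

/-- The mean of a measure supported on `[0,∞)`, with value in `ℝ≥0∞`. -/
def meanOf (μ : Measure ℝ) : ℝ≥0∞ := ∫⁻ x, ENNReal.ofReal x ∂μ

/-- A measure on `ℝ` is non-arithmetic if it is not concentrated on a lattice `d·ℤ`. -/
def NonArithmetic (μ : Measure ℝ) : Prop :=
  ¬ ∃ d : ℝ, 0 < d ∧ μ {x : ℝ | ∃ k : ℤ, x = k * d} = 1

/-- A positive function on `(0,∞)` is slowly varying at infinity if
`L(ct)/L(t) → 1` as `t → ∞` for every `c > 0`. -/
def SlowlyVarying (L : ℝ → ℝ) : Prop :=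
  (∀ t : ℝ, 0 < t → 0 < L t) ∧
    ∀ c : ℝ, 0 < c → Tendsto (fun t => L (c * t) / L t) atTop (𝓝 1)

/-- A bounded operator `T` on a Banach space has a spectral gap if its spectrum is bounded
away from the unit circle, except for the simple eigenvalue `1` and at most finitely many
further eigenvalues on the unit circle. -/
def HasSpectralGap {E : Type*} [NormedAddCommGroup E] [NormedSpace ℝ E] (T : E →L[ℝ] E) :
    Prop :=
  ∃ r : ℝ, r < 1 ∧ ∃ Sp : Finset ℝ, (∀ x ∈ Sp, |x| = 1) ∧ (1 : ℝ) ∈ Sp ∧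
    spectrum ℝ T ⊆ Metric.closedBall 0 r ∪ (Sp : Set ℝ) ∧
    Module.finrank ℝ (Module.End.eigenspace (T : E →ₗ[ℝ] E) 1) = 1

/-- A Markov renewal process: a Markov chain `Λ` on `[a,b]` with transition kernel `g`,
together with waiting times `X n` which, conditionally on the trajectory of the chain,
are independent with `X n` distributed according to `ν (Λ n)`.  `P lam` is the law of the
whole process when the chain is started from `Λ 0 = lam`. -/
structure MarkovRenewalProcess (Ω : Type) [MeasurableSpace Ω] where
  a : ℝ
  b : ℝ
  P : ℝ → Measure Ω
  g : Kernel ℝ ℝ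
  ν : Kernel ℝ ℝ
  Λ : ℕ → Ω → ℝ
  X : ℕ → Ω → ℝ
  hg : IsMarkovKernel g
  hν : IsMarkovKernel ν
  hν0 : ∀ lam ∈ Set.Icc a b, ν lam (Set.Iio 0) = 0
  hP : ∀ lam ∈ Set.Icc a b, IsProbabilityMeasure (P lam)
  hΛmeas : ∀ n, Measurable (Λ n)
  hXmeas : ∀ n, Measurable (X n)
  hΛ0 : ∀ lam ∈ Set.Icc a b, P lam {ω | Λ 0 ω = lam} = 1
  hΛrange : ∀ lam ∈ Set.Icc a b, ∀ n, P lam {ω | Λ n ω ∈ Set.Icc a b} = 1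
  hMarkov : ∀ lam ∈ Set.Icc a b, ∀ n : ℕ, ∀ A : Set ℝ, MeasurableSet A →
    ∀ B : Set Ω,
      MeasurableSet[MeasurableSpace.comap (fun ω => fun i : Fin (n + 1) => Λ i ω)
        MeasurableSpace.pi] B →
      P lam ({ω | Λ (n + 1) ω ∈ A} ∩ B) = ∫⁻ ω in B, g (Λ n ω) A ∂(P lam)
  hXcond : ∀ lam ∈ Set.Icc a b, ∀ n : ℕ, ∀ C : Fin n → Set ℝ, (∀ i, MeasurableSet (C i)) →
    ∀ B : Set Ω,
      MeasurableSet[MeasurableSpace.comap (fun ω => fun i : ℕ => Λ i ω)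
        MeasurableSpace.pi] B →
      P lam ({ω | ∀ i : Fin n, X i ω ∈ C i} ∩ B)
        = ∫⁻ ω in B, ∏ i : Fin n, ν (Λ i ω) (C i) ∂(P lam)

namespace MarkovRenewalProcess

variable {Ω : Type} [MeasurableSpace Ω] (M : MarkovRenewalProcess Ω)

/-- The renewal times `S n = X 0 + ⋯ + X (n-1)`, with `S 0 = 0`. -/
def S (n : ℕ) (ω : Ω) : ℝ := ∑ i ∈ Finset.range n, M.X i ω

/-- The number of renewals up to time `t` (including the one at time `0`):
`N t = inf {n | S n > t}`. -/
def N (t : ℝ) (ω : Ω) : ℕ := sInf {n : ℕ | t < M.S n ω}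

/-- `U lam0 t A = 1_A(lam0) + ∑_{n ≥ 1} P(S n < t, Λ n ∈ A | Λ 0 = lam0)`,
the expected number of jumps into `A` before time `t` (plus `1` if started in `A`). -/
def U (lam0 : ℝ) (t : ℝ) (A : Set ℝ) : ℝ≥0∞ :=
  A.indicator (fun _ => (1 : ℝ≥0∞)) lam0 +
    ∑' n : ℕ, M.P lam0 {ω | M.S (n + 1) ω < t ∧ M.Λ (n + 1) ω ∈ A}

/-- The distribution of the parameter of the renewal interval ongoing at time `t`:
`Φ t lam0 A = P(Λ_{N_t - 1} ∈ A | Λ 0 = lam0)`. -/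
def Phi (t : ℝ) (lam0 : ℝ) (A : Set ℝ) : ℝ≥0∞ :=
  M.P lam0 {ω | M.Λ (M.N t ω - 1) ω ∈ A}

/-- The age (spent lifetime) at time `t`: the time since the last renewal before `t`. -/
def Yage (t : ℝ) (ω : Ω) : ℝ := t - M.S (M.N t ω - 1) ω

/-- The residual lifetime at time `t`: the time until the next renewal after `t`. -/
def Zres (t : ℝ) (ω : Ω) : ℝ := M.S (M.N t ω) ω - t

/-- The total lifetime at time `t`. -/
def Ctot (t : ℝ) (ω : Ω) : ℝ := M.Yage t ω + M.Zres t ω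

end MarkovRenewalProcess

/-!
Both `Y_t` and `Z_t` are at most the length `X_n` of the renewal interval straddling `t`, whose
left end satisfies `S_n ≤ t`. Conditionally on the chain, `X_n` is independent of `S_n` and has
tail `1 - F(Λ_n ·)`, so `P(Y_t > εt)` and `P(Z_t > εt)` are at most `P(X > aεt) · U(t)` with
`U(t) = ∑ₙ P(S_n ≤ t)`. On the other hand, the intervals `min(X_n, t)` starting before `t` have
total length at most `2t`; evaluated on a grid of mesh `t/k` this gives
`U(t) · (t/k) ∑_{j<k} P(X > b(j+1)t/k) ≤ 2t`. When `P(X > x) = L(x)/x` with `L` slowly varying,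
the resulting bound tends to `2b / (aε H_k)` as `t → ∞`, where `H_k` is the `k`-th harmonic
number, and `k` is arbitrary.
-/

theorem MeasureTheory.Measure.ext_of_univ_pi {ι : Type*} [Finite ι] {α : ι → Type*}
    [∀ i, MeasurableSpace (α i)] {μ ν : Measure (∀ i, α i)} [IsFiniteMeasure μ]
    (h : ∀ C : ∀ i, Set (α i), (∀ i, MeasurableSet (C i)) → μ (univ.pi C) = ν (univ.pi C)) :
    μ = ν := by
  refine ext_of_generate_finite _ generateFrom_pi.symm isPiSystem_pi ?_ ?_
  · rintro _ ⟨C, hC, rfl⟩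
    exact h C fun i => hC i (mem_univ i)
  · simpa using h (fun _ => univ) fun _ => MeasurableSet.univ

theorem sum_range_ite_min_le_min {x : ℕ → ℝ} (hx : ∀ i, 0 ≤ x i) {t c : ℝ} (htc : 0 ≤ t + c)
    (m : ℕ) :
    ∑ n ∈ Finset.range m, (if ∑ i ∈ Finset.range n, x i ≤ t then min (x n) c else 0)
      ≤ min (∑ i ∈ Finset.range m, x i) (t + c) := by
  induction m with
  | zero => simpa using htc
  | succ m ih =>
    rw [Finset.sum_range_succ, Finset.sum_range_succ]
    have := min_le_left (x m) c
    have := min_le_right (x m) c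
    have := min_le_left (∑ i ∈ Finset.range m, x i) (t + c)
    split_ifs with hm
    · exact le_min (by linarith) (by linarith)
    · exact (add_zero _).le.trans (ih.trans (min_le_min_right _ (by linarith [hx m])))

theorem sum_range_ite_lt_le_min {h x : ℝ} (hh : 0 ≤ h) (hx : 0 ≤ x) (k : ℕ) :
    ∑ j ∈ Finset.range k, (if (j + 1) * h < x then h else 0) ≤ min x (k * h) := by
  induction k with
  | zero => simpa using hx
  | succ k ih =>
    rw [Finset.sum_range_succ]
    push_cast
    have := min_le_right x (k * h)
    split_ifs with hk
    · exact le_min (by linarith) (by linarith)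
    · exact (add_zero _).le.trans (ih.trans (min_le_min_left _ (by linarith)))

theorem sum_range_sum_range_ite_le {x : ℕ → ℝ} (hx : ∀ i, 0 ≤ x i) {t h : ℝ} (ht : 0 ≤ t)
    (hh : 0 ≤ h) (m k : ℕ) :
    ∑ n ∈ Finset.range m, ∑ j ∈ Finset.range k,
      (if ∑ i ∈ Finset.range n, x i ≤ t ∧ (j + 1) * h < x n then h else 0) ≤ t + k * h := by
  refine le_trans (Finset.sum_le_sum fun n _ => ?_)
    ((sum_range_ite_min_le_min hx (by positivity) m).trans (min_le_right _ _))
  simp only [ite_and]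
  split_ifs
  · exact sum_range_ite_lt_le_min hh (hx n) k
  · simp

theorem SlowlyVarying.tendsto_div_sum {L : ℝ → ℝ} (hL : SlowlyVarying L) {c : ℝ} (hc : 0 < c)
    {ι : Type*} (s : Finset ι) (w d : ι → ℝ) (hd : ∀ j ∈ s, 0 < d j) (hw : ∑ j ∈ s, w j ≠ 0) :
    Tendsto (fun t => L (c * t) / ∑ j ∈ s, w j * L (d j * t)) atTop
      (𝓝 (1 / ∑ j ∈ s, w j)) := by
  have hden : Tendsto (fun t => ∑ j ∈ s, w j * (L (d j * t) / L t)) atTop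
      (𝓝 (∑ j ∈ s, w j * 1)) :=
    tendsto_finsetSum _ fun j hj => (hL.2 (d j) (hd j hj)).const_mul (w j)
  simp only [mul_one] at hden
  refine ((hL.2 c hc).div hden hw).congr' ?_
  filter_upwards [eventually_gt_atTop 0] with t ht
  simp only [← mul_div_assoc, ← Finset.sum_div]
  exact div_div_div_cancel_right₀ (hL.1 t ht).ne' _ _

theorem tendsto_nhds_zero_of_le_of_tendsto {α ι : Type*} {l : Filter α} {lk : Filter ι}
    [lk.NeBot] {f : α → ℝ} {ψ : ι → α → ℝ} {c : ι → ℝ} (hf : ∀ᶠ t in l, 0 ≤ f t)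
    (hc : Tendsto c lk (𝓝 0)) (hψ : ∀ᶠ k in lk, Tendsto (ψ k) l (𝓝 (c k)))
    (hle : ∀ᶠ k in lk, ∀ᶠ t in l, f t ≤ ψ k t) : Tendsto f l (𝓝 0) := by
  refine tendsto_order.2 ⟨fun a ha => hf.mono fun t ht => ha.trans_le ht, fun a ha => ?_⟩
  obtain ⟨k, hck, hψk, hlek⟩ := ((hc.eventually (gt_mem_nhds ha)).and (hψ.and hle)).exists
  filter_upwards [hψk.eventually (gt_mem_nhds hck), hlek] with t h1 h2
  exact h2.trans_lt h1

namespace MarkovRenewalProcess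

variable {Ω : Type} [MeasurableSpace Ω] (M : MarkovRenewalProcess Ω)

theorem measurable_S (n : ℕ) : Measurable (M.S n) :=
  Finset.measurable_sum _ fun i _ => M.hXmeas i

theorem ae_Λ_mem_Icc {lam0 : ℝ} (hlam0 : lam0 ∈ Icc M.a M.b) (n : ℕ) :
    ∀ᵐ ω ∂M.P lam0, M.Λ n ω ∈ Icc M.a M.b := by
  have := M.hP lam0 hlam0
  rw [ae_iff_measure_eq ((M.hΛmeas n) measurableSet_Icc).nullMeasurableSet,
    M.hΛrange lam0 hlam0 n, measure_univ]

theorem setLIntegral_X_mem_pi {lam0 : ℝ} (hlam0 : lam0 ∈ Icc M.a M.b) {n : ℕ}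
    {C : Fin n → Set ℝ} (hC : ∀ i, MeasurableSet (C i)) (m : ℕ) {φ : ℝ → ℝ≥0∞}
    (hφ : Measurable φ) :
    ∫⁻ ω in {ω | ∀ i : Fin n, M.X i ω ∈ C i}, φ (M.Λ m ω) ∂M.P lam0 =
      ∫⁻ ω, (∏ i : Fin n, M.ν (M.Λ i ω) (C i)) * φ (M.Λ m ω) ∂M.P lam0 := by
  have hprod : Measurable fun ω => ∏ i : Fin n, M.ν (M.Λ i ω) (C i) :=
    Finset.measurable_prod _ fun i _ => (M.ν.measurable_coe (hC i)).comp (M.hΛmeas i)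
  have hmap : ((M.P lam0).restrict {ω | ∀ i : Fin n, M.X i ω ∈ C i}).map (M.Λ m) =
      ((M.P lam0).withDensity fun ω => ∏ i : Fin n, M.ν (M.Λ i ω) (C i)).map (M.Λ m) := by
    ext D hD
    rw [Measure.map_apply (M.hΛmeas m) hD, Measure.map_apply (M.hΛmeas m) hD,
      Measure.restrict_apply ((M.hΛmeas m) hD), withDensity_apply _ ((M.hΛmeas m) hD),
      inter_comm]
    exact M.hXcond lam0 hlam0 n C hC _ ⟨{f | f m ∈ D}, measurable_pi_apply m hD, rfl⟩
  rw [← lintegral_map hφ (M.hΛmeas m), hmap, lintegral_map hφ (M.hΛmeas m)]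
  exact lintegral_withDensity_eq_lintegral_mul _ hprod (hφ.comp (M.hΛmeas m))

theorem measure_X_mem_pi_inter_X_mem {lam0 : ℝ} (hlam0 : lam0 ∈ Icc M.a M.b) {n : ℕ}
    {C : Fin n → Set ℝ} (hC : ∀ i, MeasurableSet (C i)) {A : Set ℝ} (hA : MeasurableSet A) :
    M.P lam0 ({ω | ∀ i : Fin n, M.X i ω ∈ C i} ∩ {ω | M.X n ω ∈ A}) =
      ∫⁻ ω in {ω | ∀ i : Fin n, M.X i ω ∈ C i}, M.ν (M.Λ n ω) A ∂M.P lam0 := by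
  have hsnoc : {ω | ∀ i : Fin (n + 1), M.X i ω ∈ Fin.snoc (α := fun _ => Set ℝ) C A i} =
      {ω | ∀ i : Fin n, M.X i ω ∈ C i} ∩ {ω | M.X n ω ∈ A} := by
    ext ω
    simp [Fin.forall_fin_succ']
  have hsnocm : ∀ i, MeasurableSet (Fin.snoc (α := fun _ => Set ℝ) C A i) :=
    Fin.lastCases (by simpa using hA) (by simpa using hC)
  rw [← hsnoc, ← inter_univ {ω | _}, M.hXcond lam0 hlam0 (n + 1) _ hsnocm univ
    MeasurableSet.univ, Measure.restrict_univ,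
    M.setLIntegral_X_mem_pi hlam0 hC n (M.ν.measurable_coe hA)]
  simp [Fin.prod_univ_castSucc]

theorem measure_X_preimage_inter_X_mem {lam0 : ℝ} (hlam0 : lam0 ∈ Icc M.a M.b) {n : ℕ}
    {B : Set (Fin n → ℝ)} (hB : MeasurableSet B) {A : Set ℝ} (hA : MeasurableSet A) :
    M.P lam0 ((fun ω (i : Fin n) => M.X i ω) ⁻¹' B ∩ {ω | M.X n ω ∈ A}) =
      ∫⁻ ω in (fun ω (i : Fin n) => M.X i ω) ⁻¹' B, M.ν (M.Λ n ω) A ∂M.P lam0 := by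
  have := M.hP lam0 hlam0
  have hX : Measurable fun ω (i : Fin n) => M.X i ω := measurable_pi_lambda _ fun i => M.hXmeas i
  have hmap : ((M.P lam0).restrict {ω | M.X n ω ∈ A}).map (fun ω (i : Fin n) => M.X i ω) =
      ((M.P lam0).withDensity fun ω => M.ν (M.Λ n ω) A).map fun ω (i : Fin n) => M.X i ω := by
    refine Measure.ext_of_univ_pi fun C hC => ?_
    rw [Measure.map_apply hX (.univ_pi hC), Measure.map_apply hX (.univ_pi hC),
      Measure.restrict_apply (hX (.univ_pi hC)), withDensity_apply _ (hX (.univ_pi hC))]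
    simpa [preimage, Set.pi] using M.measure_X_mem_pi_inter_X_mem hlam0 hC hA
  simpa [Measure.map_apply hX hB, Measure.restrict_apply (hX hB), withDensity_apply _ (hX hB)]
    using congrArg (· B) hmap

theorem ae_X_nonneg {lam0 : ℝ} (hlam0 : lam0 ∈ Icc M.a M.b) :
    ∀ᵐ ω ∂M.P lam0, ∀ i, 0 ≤ M.X i ω := by
  refine ae_all_iff.2 fun i => ?_
  have hν0 : ∀ᵐ ω ∂M.P lam0, M.ν (M.Λ i ω) (Iio 0) = 0 :=
    (M.ae_Λ_mem_Icc hlam0 i).mono fun ω hω => M.hν0 _ hω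
  have h := M.measure_X_preimage_inter_X_mem hlam0 (n := i) .univ (measurableSet_Iio (a := 0))
  rw [preimage_univ, univ_inter, Measure.restrict_univ, lintegral_congr_ae hν0,
    lintegral_zero] at h
  simpa [ae_iff] using h

theorem ν_Ioi_eq {μF : Measure ℝ} [IsProbabilityMeasure μF]
    (hscaled : ∀ lam ∈ Icc M.a M.b, ∀ t : ℝ, M.ν lam (Iic t) = μF (Iic (lam * t)))
    {lam : ℝ} (hlam : lam ∈ Icc M.a M.b) (u : ℝ) :
    M.ν lam (Ioi u) = μF (Ioi (lam * u)) := by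
  have := M.hν
  rw [← compl_Iic, ← compl_Iic, prob_compl_eq_one_sub measurableSet_Iic,
    prob_compl_eq_one_sub measurableSet_Iic, hscaled lam hlam u]

theorem measure_S_le_inter_X_gt {lam0 : ℝ} (hlam0 : lam0 ∈ Icc M.a M.b) (n : ℕ) (s u : ℝ) :
    M.P lam0 ({ω | M.S n ω ≤ s} ∩ {ω | u < M.X n ω}) =
      ∫⁻ ω in {ω | M.S n ω ≤ s}, M.ν (M.Λ n ω) (Ioi u) ∂M.P lam0 := by
  have hS : {ω | M.S n ω ≤ s} = (fun ω (i : Fin n) => M.X i ω) ⁻¹' {f | ∑ i, f i ≤ s} := by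
    ext ω
    simp [S, Fin.sum_univ_eq_sum_range (fun i => M.X i ω) n]
  rw [hS]
  exact M.measure_X_preimage_inter_X_mem hlam0
    (measurableSet_le (Finset.measurable_sum _ fun i _ => measurable_pi_apply i)
      measurable_const) measurableSet_Ioi

theorem measure_S_le_inter_X_gt_le {lam0 : ℝ} (hlam0 : lam0 ∈ Icc M.a M.b)
    {μF : Measure ℝ} [IsProbabilityMeasure μF]
    (hscaled : ∀ lam ∈ Icc M.a M.b, ∀ t : ℝ, M.ν lam (Iic t) = μF (Iic (lam * t)))
    (n : ℕ) (s : ℝ) {u : ℝ} (hu : 0 ≤ u) :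
    M.P lam0 ({ω | M.S n ω ≤ s} ∩ {ω | u < M.X n ω}) ≤
      μF (Ioi (M.a * u)) * M.P lam0 {ω | M.S n ω ≤ s} := by
  rw [M.measure_S_le_inter_X_gt hlam0, ← setLIntegral_const]
  refine lintegral_mono_ae (ae_restrict_of_ae ((M.ae_Λ_mem_Icc hlam0 n).mono fun ω hω => ?_))
  rw [M.ν_Ioi_eq hscaled hω]
  exact measure_mono (Ioi_subset_Ioi (mul_le_mul_of_nonneg_right hω.1 hu))

theorem le_measure_S_le_inter_X_gt {lam0 : ℝ} (hlam0 : lam0 ∈ Icc M.a M.b)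
    {μF : Measure ℝ} [IsProbabilityMeasure μF]
    (hscaled : ∀ lam ∈ Icc M.a M.b, ∀ t : ℝ, M.ν lam (Iic t) = μF (Iic (lam * t)))
    (n : ℕ) (s : ℝ) {u : ℝ} (hu : 0 ≤ u) :
    μF (Ioi (M.b * u)) * M.P lam0 {ω | M.S n ω ≤ s} ≤
      M.P lam0 ({ω | M.S n ω ≤ s} ∩ {ω | u < M.X n ω}) := by
  rw [M.measure_S_le_inter_X_gt hlam0, ← setLIntegral_const]
  refine lintegral_mono_ae (ae_restrict_of_ae ((M.ae_Λ_mem_Icc hlam0 n).mono fun ω hω => ?_))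
  rw [M.ν_Ioi_eq hscaled hω]
  exact measure_mono (Ioi_subset_Ioi (mul_le_mul_of_nonneg_right hω.2 hu))

def meanRenewalCount (lam0 t : ℝ) : ℝ≥0∞ := ∑' n, M.P lam0 {ω | M.S n ω ≤ t}

theorem ofReal_mul_sum_mul_meanRenewalCount_le {lam0 : ℝ} (hlam0 : lam0 ∈ Icc M.a M.b)
    {μF : Measure ℝ} [IsProbabilityMeasure μF]
    (hscaled : ∀ lam ∈ Icc M.a M.b, ∀ t : ℝ, M.ν lam (Iic t) = μF (Iic (lam * t)))
    {t h : ℝ} (ht : 0 ≤ t) (hh : 0 ≤ h) (k : ℕ) :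
    ENNReal.ofReal h * (∑ j ∈ Finset.range k, μF (Ioi (M.b * ((j + 1) * h)))) *
      M.meanRenewalCount lam0 t ≤ ENNReal.ofReal (t + k * h) := by
  have := M.hP lam0 hlam0
  set D : ℕ → ℕ → Set Ω := fun n j => {ω | M.S n ω ≤ t} ∩ {ω | (j + 1) * h < M.X n ω}
  have hD : ∀ n j, MeasurableSet (D n j) := fun n j =>
    (M.measurable_S n measurableSet_Iic).inter (measurableSet_lt measurable_const (M.hXmeas n))
  rw [meanRenewalCount, ← ENNReal.tsum_mul_left]
  refine ENNReal.tsum_le_of_sum_range_le fun m => ?_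
  have hcount : ∀ᵐ ω ∂M.P lam0, ∑ n ∈ Finset.range m, ∑ j ∈ Finset.range k,
      (D n j).indicator (fun _ => ENNReal.ofReal h) ω ≤ ENNReal.ofReal (t + k * h) := by
    filter_upwards [M.ae_X_nonneg hlam0] with ω hω
    refine le_of_eq_of_le ?_
      (ENNReal.ofReal_le_ofReal (sum_range_sum_range_ite_le hω ht hh m k))
    rw [ENNReal.ofReal_sum_of_nonneg fun n _ => Finset.sum_nonneg fun j _ => by positivity]
    refine Finset.sum_congr rfl fun n _ => ?_
    rw [ENNReal.ofReal_sum_of_nonneg fun j _ => by positivity]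
    refine Finset.sum_congr rfl fun j _ => ?_
    simp only [indicator_apply, apply_ite ENNReal.ofReal, ENNReal.ofReal_zero]
    rfl
  calc ∑ n ∈ Finset.range m, ENNReal.ofReal h *
        (∑ j ∈ Finset.range k, μF (Ioi (M.b * ((j + 1) * h)))) * M.P lam0 {ω | M.S n ω ≤ t}
      = ∑ n ∈ Finset.range m, ∑ j ∈ Finset.range k, ENNReal.ofReal h *
          (μF (Ioi (M.b * ((j + 1) * h))) * M.P lam0 {ω | M.S n ω ≤ t}) := by
        simp only [Finset.mul_sum, Finset.sum_mul, mul_assoc]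
    _ ≤ ∑ n ∈ Finset.range m, ∑ j ∈ Finset.range k, ENNReal.ofReal h * M.P lam0 (D n j) := by
        gcongr with n _ j _
        exact M.le_measure_S_le_inter_X_gt hlam0 hscaled n t (by positivity)
    _ = ∫⁻ ω, ∑ n ∈ Finset.range m, ∑ j ∈ Finset.range k,
          (D n j).indicator (fun _ => ENNReal.ofReal h) ω ∂M.P lam0 := by
        rw [lintegral_finsetSum _ fun n _ => Finset.measurable_sum _ fun j _ =>
          measurable_const.indicator (hD n j)]
        refine Finset.sum_congr rfl fun n _ => ?_
        rw [lintegral_finsetSum _ fun j _ => measurable_const.indicator (hD n j)]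
        simp only [lintegral_indicator_const (hD _ _)]
    _ ≤ ENNReal.ofReal (t + k * h) :=
        (lintegral_mono_ae hcount).trans (by simp)

theorem measure_lt_abs_div_le {lam0 : ℝ} (hlam0 : lam0 ∈ Icc M.a M.b)
    {μF : Measure ℝ} [IsProbabilityMeasure μF]
    (hscaled : ∀ lam ∈ Icc M.a M.b, ∀ t : ℝ, M.ν lam (Iic t) = μF (Iic (lam * t)))
    {W : Ω → ℝ} {t ε : ℝ} (ht : 0 < t) (hε : 0 ≤ ε)
    (hW : ∀ ω, (∃ n, t < M.S n ω) → ∃ n, M.S n ω ≤ t ∧ |W ω| ≤ M.X n ω)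
    (hU : M.meanRenewalCount lam0 t ≠ ⊤) :
    M.P lam0 {ω | ε < |W ω / t|} ≤ μF (Ioi (M.a * (ε * t))) * M.meanRenewalCount lam0 t := by
  have hsub : {ω | ε < |W ω / t|} ⊆
      (⋃ n, {ω | M.S n ω ≤ t} ∩ {ω | ε * t < M.X n ω}) ∪ {ω | ∀ n, M.S n ω ≤ t} := by
    intro ω hω
    by_cases hN : ∃ n, t < M.S n ω
    · obtain ⟨n, hSn, hWn⟩ := hW ω hN
      rw [mem_ofPred_eq, abs_div, abs_of_pos ht, lt_div_iff₀ ht] at hω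
      exact Or.inl (mem_iUnion.2 ⟨n, hSn, hω.trans_le hWn⟩)
    · exact Or.inr fun n => not_lt.1 fun h => hN ⟨n, h⟩
  have hnull : M.P lam0 {ω | ∀ n, M.S n ω ≤ t} = 0 :=
    le_antisymm (ge_of_tendsto' (ENNReal.tendsto_atTop_zero_of_tsum_ne_top hU)
      fun n => measure_mono fun ω hω => hω n) bot_le
  calc M.P lam0 {ω | ε < |W ω / t|}
      ≤ M.P lam0 (⋃ n, {ω | M.S n ω ≤ t} ∩ {ω | ε * t < M.X n ω}) +
          M.P lam0 {ω | ∀ n, M.S n ω ≤ t} :=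
        (measure_mono hsub).trans (measure_union_le _ _)
    _ ≤ ∑' n, M.P lam0 ({ω | M.S n ω ≤ t} ∩ {ω | ε * t < M.X n ω}) := by
        rw [hnull, add_zero]
        exact measure_iUnion_le _
    _ ≤ ∑' n, μF (Ioi (M.a * (ε * t))) * M.P lam0 {ω | M.S n ω ≤ t} :=
        ENNReal.tsum_le_tsum fun n =>
          M.measure_S_le_inter_X_gt_le hlam0 hscaled n t (by positivity)
    _ = μF (Ioi (M.a * (ε * t))) * M.meanRenewalCount lam0 t := ENNReal.tsum_mul_left

theorem toReal_measure_lt_abs_div_le {lam0 : ℝ} (hlam0 : lam0 ∈ Icc M.a M.b)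
    {μF : Measure ℝ} [IsProbabilityMeasure μF]
    (hscaled : ∀ lam ∈ Icc M.a M.b, ∀ t : ℝ, M.ν lam (Iic t) = μF (Iic (lam * t)))
    {W : Ω → ℝ} {t ε : ℝ} (ht : 0 < t) (hε : 0 ≤ ε)
    (hW : ∀ ω, (∃ n, t < M.S n ω) → ∃ n, M.S n ω ≤ t ∧ |W ω| ≤ M.X n ω)
    {h : ℝ} (hh : 0 ≤ h) (k : ℕ)
    (hpos : 0 < h * ∑ j ∈ Finset.range k, (μF (Ioi (M.b * ((j + 1) * h)))).toReal) :
    (M.P lam0 {ω | ε < |W ω / t|}).toReal ≤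
      (μF (Ioi (M.a * (ε * t)))).toReal * (t + k * h) /
        (h * ∑ j ∈ Finset.range k, (μF (Ioi (M.b * ((j + 1) * h)))).toReal) := by
  set D := ENNReal.ofReal h * ∑ j ∈ Finset.range k, μF (Ioi (M.b * ((j + 1) * h)))
  have hD : D.toReal = h * ∑ j ∈ Finset.range k, (μF (Ioi (M.b * ((j + 1) * h)))).toReal := by
    rw [ENNReal.toReal_mul, ENNReal.toReal_ofReal hh,
      ENNReal.toReal_sum fun j _ => measure_ne_top _ _]
  have hD0 : D ≠ 0 := fun h0 => by simp [← hD, h0] at hpos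
  have hbound := M.ofReal_mul_sum_mul_meanRenewalCount_le hlam0 hscaled ht.le hh k
  have hU : M.meanRenewalCount lam0 t ≠ ⊤ := fun hU => by
    rw [hU, ENNReal.mul_top hD0, top_le_iff] at hbound
    exact ENNReal.ofReal_ne_top hbound
  have hP : (M.P lam0 {ω | ε < |W ω / t|}).toReal ≤
      (μF (Ioi (M.a * (ε * t)))).toReal * (M.meanRenewalCount lam0 t).toReal := by
    rw [← ENNReal.toReal_mul]
    exact ENNReal.toReal_mono (ENNReal.mul_ne_top (measure_ne_top _ _) hU)
      (M.measure_lt_abs_div_le hlam0 hscaled ht hε hW hU)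
  have hUD : D.toReal * (M.meanRenewalCount lam0 t).toReal ≤ t + k * h := by
    rw [← ENNReal.toReal_mul, ← ENNReal.toReal_ofReal (by positivity : 0 ≤ t + k * h)]
    exact ENNReal.toReal_mono ENNReal.ofReal_ne_top hbound
  rw [← hD] at hpos ⊢
  rw [le_div_iff₀ hpos]
  calc (M.P lam0 {ω | ε < |W ω / t|}).toReal * D.toReal
      ≤ (μF (Ioi (M.a * (ε * t)))).toReal * (M.meanRenewalCount lam0 t).toReal * D.toReal :=
        mul_le_mul_of_nonneg_right hP hpos.le
    _ = (μF (Ioi (M.a * (ε * t)))).toReal * (D.toReal * (M.meanRenewalCount lam0 t).toReal) :=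
        by ring
    _ ≤ (μF (Ioi (M.a * (ε * t)))).toReal * (t + k * h) :=
        mul_le_mul_of_nonneg_left hUD ENNReal.toReal_nonneg

theorem tendsto_measure_lt_abs_div {lam0 : ℝ} (hlam0 : lam0 ∈ Icc M.a M.b) (h0a : 0 < M.a)
    (hab : M.a ≤ M.b) {μF : Measure ℝ} [IsProbabilityMeasure μF]
    (hscaled : ∀ lam ∈ Icc M.a M.b, ∀ t : ℝ, M.ν lam (Iic t) = μF (Iic (lam * t)))
    {L : ℝ → ℝ} (hL : SlowlyVarying L)
    (htail : ∀ t : ℝ, 0 < t → 1 - cdfOf μF t = t ^ (-(1:ℝ)) * L t)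
    {W : ℝ → Ω → ℝ}
    (hW : ∀ t, 0 < t → ∀ ω, (∃ n, t < M.S n ω) → ∃ n, M.S n ω ≤ t ∧ |W t ω| ≤ M.X n ω)
    {ε : ℝ} (hε : 0 < ε) :
    Tendsto (fun t => (M.P lam0 {ω | ε < |W t ω / t|}).toReal) atTop (𝓝 0) := by
  have hb : 0 < M.b := h0a.trans_le hab
  have hF : ∀ x, 0 < x → (μF (Ioi x)).toReal = L x / x := fun x hx => by
    rw [← compl_Iic, prob_compl_eq_one_sub measurableSet_Iic,
      ENNReal.toReal_sub_of_le prob_le_one ENNReal.one_ne_top, ENNReal.toReal_one,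
      ← cdfOf, htail x hx, Real.rpow_neg_one, inv_mul_eq_div]
  set w : ℕ → ℝ := fun j => 1 / (M.b * (j + 1))
  have hw : ∀ k, 1 ≤ k → 0 < ∑ j ∈ Finset.range k, w j := fun k hk =>
    Finset.sum_pos (fun j _ => by positivity) (Finset.nonempty_range_iff.2 (by omega))
  have hH : Tendsto (fun k => ∑ j ∈ Finset.range k, w j) atTop atTop := by
    refine (Real.tendsto_sum_range_one_div_nat_succ_atTop.atTop_mul_const (inv_pos.2 hb)).congr
      fun k => ?_
    rw [Finset.sum_mul]
    refine Finset.sum_congr rfl fun j _ => ?_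
    simp only [w]
    field_simp
  refine tendsto_nhds_zero_of_le_of_tendsto (lk := atTop)
    (ψ := fun k t => 2 / (M.a * ε) *
      (L (M.a * ε * t) / ∑ j ∈ Finset.range k, w j * L (M.b * (j + 1) / k * t)))
    (c := fun k => 2 / (M.a * ε) * (1 / ∑ j ∈ Finset.range k, w j))
    (.of_forall fun _ => ENNReal.toReal_nonneg) ?_ ?_ ?_
  · simpa using (hH.const_div_atTop 1).const_mul (2 / (M.a * ε))
  · filter_upwards [eventually_ge_atTop 1] with k hk
    exact (hL.tendsto_div_sum (by positivity) _ w _ (fun j _ => by positivity)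
      (hw k hk).ne').const_mul _
  filter_upwards [eventually_ge_atTop 1] with k hk
  filter_upwards [eventually_gt_atTop 0] with t ht
  have hnum : (μF (Ioi (M.a * (ε * t)))).toReal * (t + k * (t / k)) =
      2 / (M.a * ε) * L (M.a * ε * t) := by
    rw [← mul_assoc, hF _ (by positivity)]
    field_simp
    ring
  have hden : t / k * ∑ j ∈ Finset.range k, (μF (Ioi (M.b * ((j + 1) * (t / k))))).toReal =
      ∑ j ∈ Finset.range k, w j * L (M.b * (j + 1) / k * t) := by
    rw [Finset.mul_sum]
    refine Finset.sum_congr rfl fun j _ => ?_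
    rw [show M.b * ((j + 1) * (t / k)) = M.b * (j + 1) / k * t by ring, hF _ (by positivity)]
    simp only [w]
    field_simp
  have hpos : 0 < t / k * ∑ j ∈ Finset.range k, (μF (Ioi (M.b * ((j + 1) * (t / k))))).toReal := by
    rw [hden]
    exact Finset.sum_pos (fun j _ => mul_pos (by positivity) (hL.1 _ (by positivity)))
      (Finset.nonempty_range_iff.2 (by omega))
  refine (M.toReal_measure_lt_abs_div_le hlam0 hscaled ht hε.le (hW t ht) (by positivity) k
    hpos).trans_eq ?_
  rw [hnum, hden, mul_div_assoc]

theorem S_N_pred_le_and_lt_S_N {t : ℝ} (ht : 0 ≤ t) {ω : Ω} (hN : ∃ n, t < M.S n ω) :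
    M.S (M.N t ω - 1) ω ≤ t ∧ t < M.S (M.N t ω) ω ∧
      M.S (M.N t ω) ω = M.S (M.N t ω - 1) ω + M.X (M.N t ω - 1) ω := by
  have hmem : t < M.S (M.N t ω) ω := Nat.sInf_mem hN
  have hN0 : M.N t ω ≠ 0 := fun h0 => by
    simp only [h0, S, Finset.range_zero, Finset.sum_empty] at hmem
    linarith
  obtain ⟨k, hk⟩ := Nat.exists_eq_succ_of_ne_zero hN0
  have hpred : ¬ t < M.S k ω := Nat.notMem_of_lt_sInf (hk ▸ Nat.lt_succ_self k)
  rw [hk, Nat.succ_sub_one]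
  exact ⟨not_lt.1 hpred, hk ▸ hmem, Finset.sum_range_succ _ _⟩

theorem exists_S_le_abs_Yage_le {t : ℝ} (ht : 0 ≤ t) {ω : Ω} (hN : ∃ n, t < M.S n ω) :
    ∃ n, M.S n ω ≤ t ∧ |M.Yage t ω| ≤ M.X n ω := by
  obtain ⟨h1, h2, h3⟩ := M.S_N_pred_le_and_lt_S_N ht hN
  exact ⟨_, h1, abs_le.2 ⟨by rw [Yage]; linarith, by rw [Yage]; linarith⟩⟩

theorem exists_S_le_abs_Zres_le {t : ℝ} (ht : 0 ≤ t) {ω : Ω} (hN : ∃ n, t < M.S n ω) :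
    ∃ n, M.S n ω ≤ t ∧ |M.Zres t ω| ≤ M.X n ω := by
  obtain ⟨h1, h2, h3⟩ := M.S_N_pred_le_and_lt_S_N ht hN
  exact ⟨_, h1, abs_le.2 ⟨by rw [Zres]; linarith, by rw [Zres]; linarith⟩⟩

end MarkovRenewalProcess

theorem age_and_residual_over_t_alpha_one_general
    {Ω : Type} [MeasurableSpace Ω] (M : MarkovRenewalProcess Ω)
    (h0a : 0 < M.a) (hab : M.a ≤ M.b)
    (μF : Measure ℝ) (hμFprob : IsProbabilityMeasure μF)
    (hscaled : ∀ lam ∈ Set.Icc M.a M.b, ∀ t : ℝ, M.ν lam (Set.Iic t) = μF (Set.Iic (lam * t)))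
    (L : ℝ → ℝ) (hL : SlowlyVarying L)
    (htail : ∀ t : ℝ, 0 < t → 1 - cdfOf μF t = t ^ (-(1:ℝ)) * L t)
    (lam0 : ℝ) (hlam0 : lam0 ∈ Set.Icc M.a M.b) :
    (∀ ε > (0:ℝ), Tendsto (fun t : ℝ =>
        (M.P lam0 {ω | ε < |M.Yage t ω / t|}).toReal) atTop (𝓝 0)) ∧
      ∀ ε > (0:ℝ), Tendsto (fun t : ℝ =>
        (M.P lam0 {ω | ε < |M.Zres t ω / t|}).toReal) atTop (𝓝 0) :=
  ⟨fun _ hε => M.tendsto_measure_lt_abs_div hlam0 h0a hab hscaled hL htail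
      (fun _ ht _ => M.exists_S_le_abs_Yage_le ht.le) hε,
    fun _ hε => M.tendsto_measure_lt_abs_div hlam0 h0a hab hscaled hL htail
      (fun _ ht _ => M.exists_S_le_abs_Zres_le ht.le) hε⟩

/-- In the case `α = 1`, both `Y_t/t` and `Z_t/t` converge to `0` in
probability. -/
theorem age_and_residual_over_t_alpha_one
    {Ω : Type} [MeasurableSpace Ω] (M : MarkovRenewalProcess Ω)
    (h0a : 0 < M.a) (hab : M.a ≤ M.b)
    (hδ : ∃ δ > (0:ℝ), ∃ c < (1:ℝ), ∀ lam ∈ Set.Icc M.a M.b, cdfOf (M.ν lam) δ ≤ c)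
    (hK : ∃ K > (0:ℝ), ∃ c > (0:ℝ), ∀ lam ∈ Set.Icc M.a M.b, c ≤ cdfOf (M.ν lam) K)
    (μF : Measure ℝ) (hμFprob : IsProbabilityMeasure μF) (hμF0 : μF (Set.Iio 0) = 0)
    (hμFNA : NonArithmetic μF)
    (hscaled : ∀ lam ∈ Set.Icc M.a M.b, ∀ t : ℝ, M.ν lam (Set.Iic t) = μF (Set.Iic (lam * t)))
    (L : ℝ → ℝ) (hL : SlowlyVarying L)
    (htail : ∀ t : ℝ, 0 < t → 1 - cdfOf μF t = t ^ (-(1:ℝ)) * L t)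
    (ρs : Measure ℝ) (hρsprob : IsProbabilityMeasure ρs)
    (hρssupp : ρs (Set.Icc M.a M.b)ᶜ = 0)
    (hstat : Kernel.Invariant M.g ρs)
    (huniq : ∀ ρ' : Measure ℝ, IsProbabilityMeasure ρ' → ρ' (Set.Icc M.a M.b)ᶜ = 0 →
      Kernel.Invariant M.g ρ' → ρ' = ρs)
    (Pop : Lp ℝ ⊤ ρs →L[ℝ] Lp ℝ ⊤ ρs)
    (hPop : ∀ (f : ℝ → ℝ) (hf : MemLp f ⊤ ρs)
      (hPf : MemLp (fun lam => ∫ y, f y ∂(M.g lam)) ⊤ ρs),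
      Pop (hf.toLp f) = hPf.toLp _)
    (hgap : HasSpectralGap Pop)
    (lam0 : ℝ) (hlam0 : lam0 ∈ Set.Icc M.a M.b) :
    (∀ ε > (0:ℝ), Tendsto (fun t : ℝ =>
        (M.P lam0 {ω | ε < |M.Yage t ω / t|}).toReal) atTop (𝓝 0)) ∧
      ∀ ε > (0:ℝ), Tendsto (fun t : ℝ =>
        (M.P lam0 {ω | ε < |M.Zres t ω / t|}).toReal) atTop (𝓝 0) :=
  age_and_residual_over_t_alpha_one_general M h0a hab μF hμFprob hscaled L hL htail lam0 hlam0
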